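/- Let x = (x₁,x₂) ∈ ℤ², let ρ > 0, and let a₁, a₂ ∈ ℝ with a₁² + a₂² > 0. Then there exists a finite constant C = C(x,ρ,a₁,a₂) such that for every λ > 0, ∫_{[0,1]²} 2·|sin(2π(x₁v₁ + x₂v₂))|·|a₁·sin(2πv₁) + a₂·sin(2πv₂)| / ( 4ρ²·(a₁·sin(2πv₁) + a₂·sin(2πv₂))² + (λ + sin²(πv₁) + sin²(πv₂))² ) dv₁ dv₂ ≤ C. -/

import Mathlib

open MeasureTheory Real


lemma abs_sin_nat_mul (n : ℕ) (y : ℝ) : |Real.sin (n * y)| ≤ n * |Real.sin y| := by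
  induction n with
  | zero => simp
  | succ n ih =>
    have h : ((n + 1 : ℕ) : ℝ) * y = n * y + y := by push_cast; ring
    rw [h, Real.sin_add]
    calc |Real.sin (n * y) * Real.cos y + Real.cos (n * y) * Real.sin y|
        ≤ |Real.sin (n * y) * Real.cos y| + |Real.cos (n * y) * Real.sin y| := abs_add_le _ _
      _ ≤ |Real.sin (n * y)| * 1 + 1 * |Real.sin y| := by
          rw [abs_mul, abs_mul]
          gcongr <;> exact Real.abs_cos_le_one _
      _ ≤ n * |Real.sin y| + 1 * |Real.sin y| := by rw [mul_one]; gcongr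
      _ = (n + 1 : ℕ) * |Real.sin y| := by push_cast; ring

lemma abs_sin_int_mul (n : ℤ) (y : ℝ) : |Real.sin (n * y)| ≤ (n.natAbs : ℝ) * |Real.sin y| := by
  obtain ⟨m, rfl | rfl⟩ := Int.eq_nat_or_neg n
  · simpa using abs_sin_nat_mul m y
  · have h : (((-(m : ℤ)) : ℤ) : ℝ) * y = -((m : ℕ) * y) := by push_cast; ring
    rw [h, Real.sin_neg, abs_neg, Int.natAbs_neg, Int.natAbs_natCast]
    exact abs_sin_nat_mul m y

lemma two_mul_min_le_sin {v : ℝ} (h0 : 0 ≤ v) (h1 : v ≤ 1) :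
    2 * min v (1 - v) ≤ Real.sin (π * v) := by
  rcases le_total v (1 - v) with hle | hle
  · rw [min_eq_left hle]
    have := Real.mul_le_sin (x := π * v) (by positivity) (by nlinarith [Real.pi_pos])
    calc 2 * v = 2 / π * (π * v) := by field_simp
      _ ≤ Real.sin (π * v) := this
  · rw [min_eq_right hle]
    have heq : π * v = π - π * (1 - v) := by ring
    rw [heq, Real.sin_pi_sub]
    have := Real.mul_le_sin (x := π * (1 - v)) (by nlinarith [Real.pi_pos]) (by nlinarith [Real.pi_pos])
    calc 2 * (1 - v) = 2 / π * (π * (1 - v)) := by field_simp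
      _ ≤ Real.sin (π * (1 - v)) := this

lemma sin_le_pi_mul_min {v : ℝ} (h0 : 0 ≤ v) (h1 : v ≤ 1) :
    Real.sin (π * v) ≤ π * min v (1 - v) := by
  rcases le_total v (1 - v) with hle | hle
  · rw [min_eq_left hle]
    exact Real.sin_le (by positivity)
  · rw [min_eq_right hle]
    have heq : π * v = π - π * (1 - v) := by ring
    rw [heq, Real.sin_pi_sub]
    exact Real.sin_le (by nlinarith [Real.pi_pos])

set_option maxHeartbeats 1000000 in
lemma ptwise (x : ℤ × ℤ) (ρ : ℝ) (hρ : 0 < ρ) (a₁ a₂ lam : ℝ) (hlam : 0 < lam)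
    {v₁ v₂ : ℝ} (h1 : v₁ ∈ Set.Ioo (0:ℝ) 1) (h2 : v₂ ∈ Set.Ioo (0:ℝ) 1) :
    2 * |Real.sin (2 * π * ((x.1 : ℝ) * v₁ + (x.2 : ℝ) * v₂))| *
        |a₁ * Real.sin (2 * π * v₁) + a₂ * Real.sin (2 * π * v₂)| /
      (4 * ρ ^ 2 * (a₁ * Real.sin (2 * π * v₁) + a₂ * Real.sin (2 * π * v₂)) ^ 2 +
        (lam + Real.sin (π * v₁) ^ 2 + Real.sin (π * v₂) ^ 2) ^ 2)
    ≤ (π * ((x.1.natAbs : ℝ) + (x.2.natAbs : ℝ)) / (4 * ρ)) *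
        (1 / Real.sqrt (min v₁ (1 - v₁)) * (1 / Real.sqrt (min v₂ (1 - v₂)))) := by
  obtain ⟨h10, h11⟩ := h1
  obtain ⟨h20, h21⟩ := h2
  set c₁ : ℝ := (x.1.natAbs : ℝ) with hc₁
  set c₂ : ℝ := (x.2.natAbs : ℝ) with hc₂
  have hc₁0 : 0 ≤ c₁ := Nat.cast_nonneg _
  have hc₂0 : 0 ≤ c₂ := Nat.cast_nonneg _
  set m₁ : ℝ := min v₁ (1 - v₁) with hm₁def
  set m₂ : ℝ := min v₂ (1 - v₂) with hm₂def
  have hm₁ : 0 < m₁ := lt_min h10 (by linarith)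
  have hm₂ : 0 < m₂ := lt_min h20 (by linarith)
  set s : ℝ := a₁ * Real.sin (2 * π * v₁) + a₂ * Real.sin (2 * π * v₂) with hs_def
  set θ : ℝ := Real.sin (π * v₁) ^ 2 + Real.sin (π * v₂) ^ 2 with hθ_def
  -- sin bounds
  have hsin1l : 2 * m₁ ≤ Real.sin (π * v₁) := two_mul_min_le_sin h10.le h11.le
  have hsin2l : 2 * m₂ ≤ Real.sin (π * v₂) := two_mul_min_le_sin h20.le h21.le
  have hsin1u : Real.sin (π * v₁) ≤ π * m₁ := sin_le_pi_mul_min h10.le h11.le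
  have hsin2u : Real.sin (π * v₂) ≤ π * m₂ := sin_le_pi_mul_min h20.le h21.le
  have hθ4 : 4 * (m₁ ^ 2 + m₂ ^ 2) ≤ θ := by
    rw [hθ_def]
    nlinarith [hm₁, hm₂]
  have hθpos : 0 < θ := lt_of_lt_of_le (by positivity) hθ4
  -- numerator bound
  have hu : |Real.sin (2 * π * ((x.1 : ℝ) * v₁ + (x.2 : ℝ) * v₂))| ≤
      2 * π * (c₁ * m₁ + c₂ * m₂) := by
    have hA : 2 * π * ((x.1 : ℝ) * v₁ + (x.2 : ℝ) * v₂) =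
        (x.1 : ℝ) * (2 * π * v₁) + (x.2 : ℝ) * (2 * π * v₂) := by ring
    rw [hA, Real.sin_add]
    have e1 : |Real.sin ((x.1 : ℝ) * (2 * π * v₁))| ≤ c₁ * |Real.sin (2 * π * v₁)| :=
      abs_sin_int_mul x.1 _
    have e2 : |Real.sin ((x.2 : ℝ) * (2 * π * v₂))| ≤ c₂ * |Real.sin (2 * π * v₂)| :=
      abs_sin_int_mul x.2 _
    have f1 : |Real.sin (2 * π * v₁)| ≤ 2 * (π * m₁) := by
      have : (2 : ℝ) * π * v₁ = 2 * (π * v₁) := by ring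
      rw [this, Real.sin_two_mul, abs_mul, abs_mul, abs_two]
      have hsnn : 0 ≤ Real.sin (π * v₁) :=
        Real.sin_nonneg_of_nonneg_of_le_pi (by positivity) (by nlinarith [Real.pi_pos])
      calc (2:ℝ) * |Real.sin (π * v₁)| * |Real.cos (π * v₁)|
          ≤ 2 * |Real.sin (π * v₁)| * 1 := by gcongr; exact Real.abs_cos_le_one _
        _ = 2 * Real.sin (π * v₁) := by rw [abs_of_nonneg hsnn]; ring
        _ ≤ 2 * (π * m₁) := by linarith
    have f2 : |Real.sin (2 * π * v₂)| ≤ 2 * (π * m₂) := by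
      have : (2 : ℝ) * π * v₂ = 2 * (π * v₂) := by ring
      rw [this, Real.sin_two_mul, abs_mul, abs_mul, abs_two]
      have hsnn : 0 ≤ Real.sin (π * v₂) :=
        Real.sin_nonneg_of_nonneg_of_le_pi (by positivity) (by nlinarith [Real.pi_pos])
      calc (2:ℝ) * |Real.sin (π * v₂)| * |Real.cos (π * v₂)|
          ≤ 2 * |Real.sin (π * v₂)| * 1 := by gcongr; exact Real.abs_cos_le_one _
        _ = 2 * Real.sin (π * v₂) := by rw [abs_of_nonneg hsnn]; ring
        _ ≤ 2 * (π * m₂) := by linarith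
    calc |Real.sin ((x.1:ℝ) * (2*π*v₁)) * Real.cos ((x.2:ℝ) * (2*π*v₂)) +
          Real.cos ((x.1:ℝ) * (2*π*v₁)) * Real.sin ((x.2:ℝ) * (2*π*v₂))|
        ≤ |Real.sin ((x.1:ℝ) * (2*π*v₁)) * Real.cos ((x.2:ℝ) * (2*π*v₂))| +
          |Real.cos ((x.1:ℝ) * (2*π*v₁)) * Real.sin ((x.2:ℝ) * (2*π*v₂))| := abs_add_le _ _
      _ ≤ |Real.sin ((x.1:ℝ) * (2*π*v₁))| * 1 + 1 * |Real.sin ((x.2:ℝ) * (2*π*v₂))| := by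
          rw [abs_mul, abs_mul]
          gcongr <;> exact Real.abs_cos_le_one _
      _ ≤ (c₁ * |Real.sin (2*π*v₁)|) * 1 + 1 * (c₂ * |Real.sin (2*π*v₂)|) := by gcongr
      _ ≤ (c₁ * (2 * (π * m₁))) * 1 + 1 * (c₂ * (2 * (π * m₂))) := by gcongr
      _ = 2 * π * (c₁ * m₁ + c₂ * m₂) := by ring
  -- the RHS rewritten
  have hr : Real.sqrt (m₁ * m₂) = Real.sqrt m₁ * Real.sqrt m₂ := Real.sqrt_mul hm₁.le _
  have hrpos : 0 < Real.sqrt (m₁ * m₂) := Real.sqrt_pos.2 (by positivity)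
  have hRHS : (π * (c₁ + c₂) / (4 * ρ)) * (1 / Real.sqrt m₁ * (1 / Real.sqrt m₂)) =
      π * (c₁ + c₂) / (4 * ρ * Real.sqrt (m₁ * m₂)) := by
    rw [hr]; field_simp
  rw [hRHS]
  -- key AM-GM facts
  set r : ℝ := Real.sqrt (m₁ * m₂) with hrdef
  have hr2 : r ^ 2 = m₁ * m₂ := Real.sq_sqrt (by positivity)
  have hrle : r ≤ (m₁ + m₂) / 2 := by
    rw [hrdef]
    have : m₁ * m₂ ≤ ((m₁ + m₂) / 2) ^ 2 := by nlinarith [sq_nonneg (m₁ - m₂)]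
    calc Real.sqrt (m₁ * m₂) ≤ Real.sqrt (((m₁ + m₂) / 2) ^ 2) := Real.sqrt_le_sqrt this
      _ = (m₁ + m₂) / 2 := Real.sqrt_sq (by positivity)
  have key : (m₁ + m₂) * r ≤ m₁ ^ 2 + m₂ ^ 2 := by nlinarith [hm₁, hm₂]
  -- bound the final fraction
  have hfinal : 2 * π * (c₁ * m₁ + c₂ * m₂) / (2 * ρ * θ) ≤
      π * (c₁ + c₂) / (4 * ρ * r) := by
    rw [div_le_div_iff₀ (by positivity) (by positivity)]
    have hcm : (c₁ * m₁ + c₂ * m₂) * r ≤ (c₁ + c₂) * (m₁ ^ 2 + m₂ ^ 2) := by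
      have h5 : c₁ * m₁ + c₂ * m₂ ≤ (c₁ + c₂) * (m₁ + m₂) := by nlinarith
      calc (c₁ * m₁ + c₂ * m₂) * r ≤ ((c₁ + c₂) * (m₁ + m₂)) * r := by
            apply mul_le_mul_of_nonneg_right h5 hrpos.le
        _ = (c₁ + c₂) * ((m₁ + m₂) * r) := by ring
        _ ≤ (c₁ + c₂) * (m₁ ^ 2 + m₂ ^ 2) := by
            apply mul_le_mul_of_nonneg_left key (by positivity)
    have hθ' : 4 * (m₁ ^ 2 + m₂ ^ 2) ≤ θ := hθ4
    nlinarith [Real.pi_pos, mul_le_mul_of_nonneg_left hcm (show (0:ℝ) ≤ 8 * π * ρ by positivity),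
      mul_le_mul_of_nonneg_left hθ' (show (0:ℝ) ≤ 2 * π * ρ * (c₁ + c₂) by positivity),
      mul_nonneg (mul_nonneg hc₁0 hm₁.le) hrpos.le]
  -- main case split
  rcases eq_or_ne s 0 with hs | hs
  · rw [hs]
    simp only [abs_zero, mul_zero, zero_div]
    positivity
  · have habs : 0 < |s| := abs_pos.2 hs
    have hD : 4 * ρ * |s| * θ ≤
        4 * ρ ^ 2 * s ^ 2 + (lam + Real.sin (π * v₁) ^ 2 + Real.sin (π * v₂) ^ 2) ^ 2 := by
      have hsq := two_mul_le_add_sq (2 * ρ * |s|) (lam + θ)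
      have hlt : (lam + Real.sin (π * v₁) ^ 2 + Real.sin (π * v₂) ^ 2) = lam + θ := by
        rw [hθ_def]; ring
      rw [hlt]
      nlinarith [sq_abs s, mul_pos hρ habs, hθpos, hlam]
    calc 2 * |Real.sin (2 * π * ((x.1 : ℝ) * v₁ + (x.2 : ℝ) * v₂))| * |s| /
          (4 * ρ ^ 2 * s ^ 2 + (lam + Real.sin (π * v₁) ^ 2 + Real.sin (π * v₂) ^ 2) ^ 2)
        ≤ 2 * |Real.sin (2 * π * ((x.1 : ℝ) * v₁ + (x.2 : ℝ) * v₂))| * |s| /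
          (4 * ρ * |s| * θ) := by
          apply div_le_div_of_nonneg_left (by positivity) (by positivity) hD
      _ = |Real.sin (2 * π * ((x.1 : ℝ) * v₁ + (x.2 : ℝ) * v₂))| / (2 * ρ * θ) := by
          rw [div_eq_div_iff (by positivity) (by positivity)]; ring
      _ ≤ 2 * π * (c₁ * m₁ + c₂ * m₂) / (2 * ρ * θ) := by gcongr
      _ ≤ π * (c₁ + c₂) / (4 * ρ * r) := hfinal


noncomputable def phi (t : ℝ) : ℝ := 1 / Real.sqrt (min t (1 - t))

lemma phi_integrable : IntegrableOn phi (Set.Icc (0:ℝ) 1) volume := by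
  have h1 : IntegrableOn (fun t : ℝ => t ^ (-(1/2) : ℝ)) (Set.Icc (0:ℝ) 1) volume := by
    have h := intervalIntegral.intervalIntegrable_rpow' (a := 0) (b := 1)
      (r := -(1/2)) (by norm_num)
    rw [intervalIntegrable_iff, Set.uIoc_of_le zero_le_one] at h
    exact h.congr_set_ae Ioc_ae_eq_Icc.symm
  have h2 : IntegrableOn (fun t : ℝ => (1 - t) ^ (-(1/2) : ℝ)) (Set.Icc (0:ℝ) 1) volume := by
    have h := intervalIntegral.intervalIntegrable_rpow' (a := 0) (b := 1)
      (r := -(1/2)) (by norm_num)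
    have h' := (IntervalIntegrable.comp_sub_left h 1)
    rw [intervalIntegrable_iff] at h'
    norm_num at h'
    exact (h'.congr_set_ae Ioc_ae_eq_Icc.symm : IntegrableOn _ _ _)
  refine Integrable.mono' (h1.add h2) ?_ ?_
  · apply Measurable.aestronglyMeasurable
    apply Measurable.div measurable_const
    exact (Real.continuous_sqrt.comp (continuous_id.min (continuous_const.sub continuous_id))).measurable
  · rw [ae_restrict_iff' measurableSet_Icc]
    refine Filter.Eventually.of_forall fun t ht => ?_
    obtain ⟨ht0, ht1⟩ := ht
    have hphi_nonneg : 0 ≤ phi t := by unfold phi; positivity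
    rw [Real.norm_eq_abs, abs_of_nonneg hphi_nonneg]
    have hnn1 : (0:ℝ) ≤ t ^ (-(1/2) : ℝ) := Real.rpow_nonneg ht0 _
    have hnn2 : (0:ℝ) ≤ (1 - t) ^ (-(1/2) : ℝ) := Real.rpow_nonneg (by linarith) _
    rcases le_total t (1 - t) with hle | hle
    · have : phi t = t ^ (-(1/2) : ℝ) := by
        unfold phi
        rw [min_eq_left hle, Real.rpow_neg ht0, ← Real.sqrt_eq_rpow, one_div]
      rw [this]; simp only [Pi.add_apply]; linarith
    · have : phi t = (1 - t) ^ (-(1/2) : ℝ) := by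
        unfold phi
        rw [min_eq_right hle, Real.rpow_neg (by linarith), ← Real.sqrt_eq_rpow, one_div]
      rw [this]; simp only [Pi.add_apply]; linarith

theorem stmt_10 (x : ℤ × ℤ) (ρ : ℝ) (hρ : 0 < ρ) (a₁ a₂ : ℝ) (ha : 0 < a₁ ^ 2 + a₂ ^ 2) :
    ∃ C : ℝ, ∀ lam : ℝ, 0 < lam →
      ∫ v in (Set.Icc (0 : ℝ) 1) ×ˢ (Set.Icc (0 : ℝ) 1),
          2 * |Real.sin (2 * π * ((x.1 : ℝ) * v.1 + (x.2 : ℝ) * v.2))| *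
              |a₁ * Real.sin (2 * π * v.1) + a₂ * Real.sin (2 * π * v.2)| /
            (4 * ρ ^ 2 * (a₁ * Real.sin (2 * π * v.1) + a₂ * Real.sin (2 * π * v.2)) ^ 2 +
              (lam + Real.sin (π * v.1) ^ 2 + Real.sin (π * v.2) ^ 2) ^ 2) ≤ C := by
  set T : Set (ℝ × ℝ) := (Set.Icc (0 : ℝ) 1) ×ˢ (Set.Icc (0 : ℝ) 1) with hTdef
  set S : Set (ℝ × ℝ) := (Set.Ioo (0 : ℝ) 1) ×ˢ (Set.Ioo (0 : ℝ) 1) with hSdef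
  set K : ℝ := π * ((x.1.natAbs : ℝ) + (x.2.natAbs : ℝ)) / (4 * ρ) with hKdef
  refine ⟨∫ v in T, K * (phi v.1 * phi v.2), fun lam hlam => ?_⟩
  have hg : Integrable (fun v : ℝ × ℝ => K * (phi v.1 * phi v.2)) (volume.restrict T) := by
    have h := phi_integrable.mul_prod phi_integrable
    rw [Measure.prod_restrict, ← Measure.volume_eq_prod] at h
    exact h.const_mul K
  apply integral_mono_of_nonneg
  · exact Filter.Eventually.of_forall fun v => by positivity
  · exact hg
  · have hT : MeasurableSet T := measurableSet_Icc.prod measurableSet_Icc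
    have hnull : volume (T \ S) = 0 := by
      have hsub : T \ S ⊆
          ((Set.Icc (0:ℝ) 1 \ Set.Ioo 0 1) ×ˢ Set.Icc (0:ℝ) 1) ∪
          (Set.Icc (0:ℝ) 1 ×ˢ (Set.Icc (0:ℝ) 1 \ Set.Ioo 0 1)) := by
        rintro ⟨v₁, v₂⟩ ⟨⟨h1, h2⟩, hns⟩
        by_cases hv1 : v₁ ∈ Set.Ioo (0:ℝ) 1
        · right
          refine ⟨h1, h2, fun hv2 => hns ⟨hv1, hv2⟩⟩
        · left
          exact ⟨⟨h1, hv1⟩, h2⟩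
      apply measure_mono_null hsub
      apply measure_union_null
      · rw [Measure.volume_eq_prod, Measure.prod_prod, Set.Icc_diff_Ioo_same zero_le_one]
        rw [(Set.toFinite ({0, 1} : Set ℝ)).measure_zero volume, zero_mul]
      · rw [Measure.volume_eq_prod, Measure.prod_prod, Set.Icc_diff_Ioo_same zero_le_one]
        rw [(Set.toFinite ({0, 1} : Set ℝ)).measure_zero volume, mul_zero]
    have hmem := ae_restrict_mem (μ := volume) hT
    have hns : ∀ᵐ v ∂(volume.restrict T), v ∉ T \ S := by
      rw [← measure_eq_zero_iff_ae_notMem]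
      exact le_antisymm ((Measure.restrict_apply_le _ _).trans hnull.le) zero_le
    filter_upwards [hmem, hns] with v hvT hvNS
    have hvS : v ∈ S := by
      by_contra h
      exact hvNS ⟨hvT, h⟩
    exact ptwise x ρ hρ a₁ a₂ lam hlam hvS.1 hvS.2
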